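/- arXiv:2404.15550 — 2 statements merged into one kernel-verified Lean document; each statement's English description precedes it below -/
import Mathlib

section
/- Let (X,d,μ) be a space of homogeneous type, let p(·), q(·) ∈ 𝒫(X) ∩ LH satisfy 1/p(x) − 1/q(x) ≡ η for a constant η ∈ [0,1), and let ω be a weight on X. If there is a constant C such that sup_{t>0} t ‖ω χ_{{x∈X : M_η f(x) > t}}‖_{q(·)} ≤ C‖ω f‖_{p(·)} for every measurable function f, then ω ∈ A_{p(·),q(·)}(X). -/
open MeasureTheory ENNReal Set Filter Topology

noncomputable section

variable {X : Type*}

/-- `d` is a quasi-metric on `X` with quasi-triangle constant `A0`. -/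
def IsQuasiMetric (d : X → X → ℝ) (A0 : ℝ) : Prop :=
  1 ≤ A0 ∧ (∀ x y, 0 ≤ d x y) ∧ (∀ x y, d x y = 0 ↔ x = y) ∧
    (∀ x y, d x y = d y x) ∧ ∀ x y z, d x y ≤ A0 * (d x z + d z y)

/-- The quasi-metric ball `B(c,r)`. -/
def qball (d : X → X → ℝ) (c : X) (r : ℝ) : Set X := {y | d c y < r}

/-- The measure `μ` is doubling (with constant `Cμ`) on quasi-metric balls:
`0 < μ(B(x,2r)) ≤ Cμ·μ(B(x,r)) < ∞`. -/
def IsDoubling [MeasurableSpace X] (d : X → X → ℝ) (μ : Measure X) (Cμ : ℝ≥0∞) : Prop :=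
  1 ≤ Cμ ∧ ∀ (x : X) (r : ℝ), 0 < r →
    0 < μ (qball d x (2 * r)) ∧ μ (qball d x (2 * r)) ≤ Cμ * μ (qball d x r) ∧
      Cμ * μ (qball d x r) < ∞

/-- The Luxemburg norm `‖f‖_{p(·)}` for a variable (possibly infinite) exponent `p`. -/
def luxNorm [MeasurableSpace X] (μ : Measure X) (p : X → ℝ≥0∞) (f : X → ℝ≥0∞) : ℝ≥0∞ :=
  sInf {lam : ℝ≥0∞ | 0 < lam ∧
    (∫⁻ x in {x | p x ≠ ∞}, (f x / lam) ^ (p x).toReal ∂μ) +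
      essSup (fun x => f x / lam) (μ.restrict {x | p x = ∞}) ≤ 1}

/-- The class `𝒫₁(X)`: exponents with values in `[1,∞)` and `p₊ < ∞`. -/
def MemP1 [MeasurableSpace X] (μ : Measure X) (p : X → ℝ≥0∞) : Prop :=
  Measurable p ∧ (∀ x, 1 ≤ p x) ∧ (∀ x, p x ≠ ∞) ∧ essSup p μ < ∞

/-- The class `𝒫(X)`: additionally `1 < p₋`. -/
def MemP [MeasurableSpace X] (μ : Measure X) (p : X → ℝ≥0∞) : Prop :=
  MemP1 μ p ∧ 1 < essInf p μ

/-- Local log-Hölder continuity `LH₀`. -/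
def MemLH0 (d : X → X → ℝ) (p : X → ℝ≥0∞) : Prop :=
  ∃ C0 : ℝ, 0 ≤ C0 ∧ ∀ x y, d x y < 1 / 2 →
    |(p x).toReal - (p y).toReal| ≤ C0 / Real.log (Real.exp 1 + 1 / d x y)

/-- Log-Hölder decay at infinity `LH_∞` with base point `x0` and limit value `pinf`. -/
def MemLHinf (d : X → X → ℝ) (x0 : X) (pinf : ℝ) (p : X → ℝ≥0∞) : Prop :=
  ∃ Cinf : ℝ, 0 ≤ Cinf ∧ ∀ x, |(p x).toReal - pinf| ≤ Cinf / Real.log (Real.exp 1 + d x x0)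

/-- Global log-Hölder continuity `LH = LH₀ ∩ LH_∞`. -/
def MemLH (d : X → X → ℝ) (p : X → ℝ≥0∞) : Prop :=
  MemLH0 d p ∧ ∃ x0 pinf, MemLHinf d x0 pinf p

/-- `w` is a weight: measurable, positive and finite a.e., and locally integrable. -/
def IsWeight [MeasurableSpace X] (d : X → X → ℝ) (μ : Measure X) (w : X → ℝ≥0∞) : Prop :=
  Measurable w ∧ (∀ᵐ x ∂μ, 0 < w x ∧ w x < ∞) ∧
    ∀ (c : X) (r : ℝ), 0 < r → ∫⁻ x in qball d c r, w x ∂μ < ∞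

/-- The pointwise conjugate exponent `p′(·)`, `1/p(x) + 1/p′(x) = 1`. -/
def conjExp (p : X → ℝ≥0∞) : X → ℝ≥0∞ := fun x => if p x = ∞ then 1 else p x / (p x - 1)

/-- The `A_{p(·),q(·)}` characteristic constant
`sup_B μ(B)^{η−1} ‖w χ_B‖_{q(·)} ‖w⁻¹ χ_B‖_{p′(·)}`. -/
def ApqConst [MeasurableSpace X] (d : X → X → ℝ) (μ : Measure X) (η : ℝ)
    (p q : X → ℝ≥0∞) (w : X → ℝ≥0∞) : ℝ≥0∞ :=
  ⨆ (c : X) (r : ℝ) (_ : 0 < r),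
    μ (qball d c r) ^ (η - 1) * luxNorm μ q ((qball d c r).indicator w) *
      luxNorm μ (conjExp p) ((qball d c r).indicator fun x => (w x)⁻¹)

/-- The fractional maximal operator `M_η`. -/
def fracMax [MeasurableSpace X] (d : X → X → ℝ) (μ : Measure X) (η : ℝ)
    (f : X → ℝ≥0∞) (x : X) : ℝ≥0∞ :=
  ⨆ (c : X) (r : ℝ) (_ : 0 < r) (_ : x ∈ qball d c r),
    μ (qball d c r) ^ (η - 1) * ∫⁻ y in qball d c r, f y ∂μ

/-- The Muckenhoupt `A₁` condition: `Mw ≤ C w` a.e. -/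
def MemA1 [MeasurableSpace X] (d : X → X → ℝ) (μ : Measure X) (w : X → ℝ≥0∞) : Prop :=
  ∃ C : ℝ≥0∞, C ≠ ∞ ∧ ∀ᵐ x ∂μ, fracMax d μ 0 w x ≤ C * w x

/-- The Muckenhoupt `A_p` condition for `1 < p < ∞`. -/
def MemAp [MeasurableSpace X] (d : X → X → ℝ) (μ : Measure X) (p : ℝ)
    (w : X → ℝ≥0∞) : Prop :=
  (⨆ (c : X) (r : ℝ) (_ : 0 < r),
    ((μ (qball d c r))⁻¹ * ∫⁻ x in qball d c r, w x ∂μ) *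
      ((μ (qball d c r))⁻¹ * ∫⁻ x in qball d c r, w x ^ (-(1 / (p - 1))) ∂μ) ^ (p - 1)) ≠ ∞

/-- The class `A_∞ = ⋃_{p ≥ 1} A_p`. -/
def MemAinfty [MeasurableSpace X] (d : X → X → ℝ) (μ : Measure X) (w : X → ℝ≥0∞) : Prop :=
  MemA1 d μ w ∨ ∃ p : ℝ, 1 < p ∧ MemAp d μ p w

/-!
Fix a ball `B` and write `N = ‖ω χ_B‖_{q(·)}`. For `g` in the unit ball of `L^{p(·)}`, test the
weak-type bound on `f = χ_B ω⁻¹ g`: every point of `B` lies in `{M_η f > t}` for all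
`t < μ(B)^{η-1} ∫_B ω⁻¹ g`, hence `μ(B)^{η-1} (∫_B ω⁻¹ g) N ≤ C`. Testing `g = c χ_B` shows
`N < ∞`, and then the norm-conjugate inequality `‖h‖_{p′(·)} ≤ sup_{‖g‖_{p(·)} ≤ 1} ∫ h g`, applied
to `h = ω⁻¹ χ_B`, gives `μ(B)^{η-1} N ‖ω⁻¹ χ_B‖_{p′(·)} ≤ C`. The norm-conjugate inequality is
proved by testing against the Hölder extremal `g = (h/λ)^{p′-1} ρ^{-1/p}`, where `ρ` is the
`p′(·)`-modular of `h/λ`, after truncating `h` so that `ρ < ∞`.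
-/

section LuxemburgNorm

variable [MeasurableSpace X] {μ : Measure X}

theorem luxNorm_mono_ae (e : X → ℝ≥0∞) {f g : X → ℝ≥0∞} (h : f ≤ᵐ[μ] g) :
    luxNorm μ e f ≤ luxNorm μ e g := by
  refine sInf_le_sInf fun lam ⟨hlam, hmod⟩ => ⟨hlam, le_trans (add_le_add ?_ ?_) hmod⟩
  · refine lintegral_mono_ae (ae_restrict_of_ae (h.mono fun x hx => ?_))
    exact ENNReal.rpow_le_rpow (ENNReal.div_le_div_right hx lam) ENNReal.toReal_nonneg
  · exact essSup_mono_ae (ae_restrict_of_ae (h.mono fun x hx => ENNReal.div_le_div_right hx lam))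

theorem luxNorm_le_of_lintegral_le {e f : X → ℝ≥0∞} (he : ∀ᵐ x ∂μ, e x ≠ ∞) {lam : ℝ≥0∞}
    (hlam : 0 < lam) (h : ∫⁻ x, (f x / lam) ^ (e x).toReal ∂μ ≤ 1) : luxNorm μ e f ≤ lam := by
  refine sInf_le ⟨hlam, ?_⟩
  have hnull : μ.restrict {x | e x = ∞} = 0 := by
    rw [Measure.restrict_eq_zero]
    simpa using ae_iff.mp he
  rw [hnull, essSup_measure_zero, bot_eq_zero, add_zero]
  exact (setLIntegral_le_lintegral _ _).trans h

theorem luxNorm_indicator_const_le_one {p : X → ℝ≥0∞} (hp : ∀ᵐ x ∂μ, 1 ≤ p x ∧ p x ≠ ∞)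
    {B : Set X} (hB : MeasurableSet B) {c : ℝ≥0∞} (hc : c ≤ 1) (hcB : c * μ B ≤ 1) :
    luxNorm μ p (B.indicator fun _ => c) ≤ 1 := by
  refine luxNorm_le_of_lintegral_le (hp.mono fun x hx => hx.2) one_pos ?_
  calc ∫⁻ x, (B.indicator (fun _ => c) x / 1) ^ (p x).toReal ∂μ
      ≤ ∫⁻ x, B.indicator (fun _ => c) x ∂μ := by
        refine lintegral_mono_ae (hp.mono fun x hx => ?_)
        have hp1 : 1 ≤ (p x).toReal := by
          simpa using ENNReal.toReal_mono hx.2 hx.1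
        rw [div_one]
        by_cases hxB : x ∈ B
        · simpa [hxB] using ENNReal.rpow_le_rpow_of_exponent_ge hc hp1
        · simp [hxB, ENNReal.zero_rpow_of_pos (zero_lt_one.trans_le hp1)]
    _ = c * μ B := by rw [lintegral_indicator hB, setLIntegral_const]
    _ ≤ 1 := hcB

end LuxemburgNorm

theorem one_lt_toReal_of_one_lt {a : ℝ≥0∞} (ha : 1 < a) (ha_top : a ≠ ∞) : 1 < a.toReal := by
  simpa using ENNReal.toReal_strict_mono ha_top ha

section ConjugateExponent

variable {p : X → ℝ≥0∞} {x : X}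

theorem measurable_conjExp [MeasurableSpace X] (hp : Measurable p) : Measurable (conjExp p) :=
  Measurable.ite (hp (measurableSet_singleton ∞)) measurable_const
    (hp.div (hp.sub measurable_const))

theorem conjExp_ne_top (hp : 1 < p x) : conjExp p x ≠ ∞ := by
  unfold conjExp
  split_ifs with hpt
  · exact ENNReal.one_ne_top
  · refine ENNReal.div_ne_top hpt ?_
    simpa [tsub_eq_zero_iff_le] using hp

theorem conjExp_toReal (hp : 1 < p x) (hpt : p x ≠ ∞) :
    (conjExp p x).toReal = (p x).toReal / ((p x).toReal - 1) := by
  rw [conjExp, if_neg hpt, ENNReal.toReal_div, ENNReal.toReal_sub_of_le hp.le hpt,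
    ENNReal.toReal_one]

theorem one_le_conjExp_toReal (hp : 1 < p x) (hpt : p x ≠ ∞) : 1 ≤ (conjExp p x).toReal := by
  have := one_lt_toReal_of_one_lt hp hpt
  rw [conjExp_toReal hp hpt, one_le_div (by linarith)]
  linarith

theorem conjExp_toReal_sub_one_mul (hp : 1 < p x) (hpt : p x ≠ ∞) :
    ((conjExp p x).toReal - 1) * (p x).toReal = (conjExp p x).toReal := by
  have : (p x).toReal - 1 ≠ 0 := by linarith [one_lt_toReal_of_one_lt hp hpt]
  rw [conjExp_toReal hp hpt]
  field_simp
  ring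

theorem conjExp_toReal_le {r : ℝ} (hr : 1 < r) (hrp : r ≤ (p x).toReal) (hpt : p x ≠ ∞) :
    (conjExp p x).toReal ≤ r / (r - 1) := by
  have hp : 1 < p x := by
    simpa using (ENNReal.ofReal_lt_iff_lt_toReal zero_le_one hpt).mpr (hr.trans_le hrp)
  rw [conjExp_toReal hp hpt, div_le_div_iff₀ (by linarith) (by linarith)]
  nlinarith

theorem ae_conjExp_toReal_le [MeasurableSpace X] {μ : Measure X} (hp : 1 < essInf p μ)
    (hpt : ∀ᵐ x ∂μ, p x ≠ ∞) : ∃ s : ℝ, ∀ᵐ x ∂μ, (conjExp p x).toReal ≤ s := by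
  obtain ⟨r, hr1, hrp⟩ := ENNReal.lt_iff_exists_nnreal_btwn.mp hp
  refine ⟨r / (r - 1), (hpt.and (ae_lt_of_lt_essInf hrp)).mono fun x ⟨hxt, hx⟩ => ?_⟩
  refine conjExp_toReal_le (by exact_mod_cast hr1) ?_ hxt
  simpa using ENNReal.toReal_mono hxt hx.le

end ConjugateExponent

section Duality

variable [MeasurableSpace X] {μ : Measure X}

theorem lintegral_rpow_div_eq_iSup_min {f : X → ℝ≥0∞} (hf : Measurable f) {e : X → ℝ}
    (he : Measurable e) (he0 : ∀ x, 0 ≤ e x) {lam : ℝ≥0∞} (hlam : lam ≠ 0) :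
    ∫⁻ x, (f x / lam) ^ e x ∂μ = ⨆ n : ℕ, ∫⁻ x, (min (f x) n / lam) ^ e x ∂μ := by
  have hmono : ∀ x, Monotone fun a : ℝ≥0∞ => (a / lam) ^ e x := fun x _ _ hab =>
    ENNReal.rpow_le_rpow (ENNReal.div_le_div_right hab lam) (he0 x)
  rw [← lintegral_iSup (fun n => ((hf.min measurable_const).div_const lam).pow he)
    fun m n hmn x => hmono x (min_le_min_left _ (Nat.cast_le.mpr hmn))]
  refine lintegral_congr fun x => ?_
  have hcont : Continuous fun a : ℝ≥0∞ => (a / lam) ^ e x :=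
    ENNReal.continuous_rpow_const.comp (ENNReal.continuous_div_const lam hlam)
  rw [← (hmono x).map_ciSup_of_continuousAt hcont.continuousAt]
  congr
  rw [← inf_iSup_eq, ENNReal.iSup_natCast, inf_top_eq]

theorem lintegral_rpow_ne_top_of_le_indicator {e : X → ℝ} {s : ℝ}
    (he : ∀ᵐ x ∂μ, 0 < e x ∧ e x ≤ s) {B : Set X} (hB : MeasurableSet B) (hμB : μ B ≠ ∞)
    {c : ℝ≥0∞} (hc : c ≠ ∞) {f : X → ℝ≥0∞} (hf : ∀ x, f x ≤ B.indicator (fun _ => c) x) :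
    ∫⁻ x, f x ^ e x ∂μ ≠ ∞ := by
  have hmax : max 1 c ^ s ≠ ∞ :=
    ENNReal.rpow_ne_top_of_ne_zero (zero_lt_one.trans_le (le_max_left 1 c)).ne'
      (max_ne_top ENNReal.one_ne_top hc)
  refine ne_top_of_le_ne_top (ENNReal.mul_ne_top hmax hμB) ?_
  calc ∫⁻ x, f x ^ e x ∂μ ≤ ∫⁻ x, B.indicator (fun _ => max 1 c ^ s) x ∂μ := by
        refine lintegral_mono_ae (he.mono fun x ⟨he0, hes⟩ => ?_)
        by_cases hxB : x ∈ B
        · have hfc : f x ≤ max 1 c := by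
            have := hf x
            rw [indicator_of_mem hxB] at this
            exact this.trans (le_max_right 1 c)
          rw [indicator_of_mem hxB]
          exact (ENNReal.rpow_le_rpow hfc he0.le).trans
            (ENNReal.rpow_le_rpow_of_exponent_le (le_max_left 1 c) hes)
        · have hf0 : f x = 0 := by simpa [hxB] using hf x
          simp [hxB, hf0, ENNReal.zero_rpow_of_pos he0]
    _ = max 1 c ^ s * μ B := by rw [lintegral_indicator hB, setLIntegral_const]

theorem lintegral_rpow_conjExp_le_one {p : X → ℝ≥0∞} (hpm : Measurable p)
    (hp : ∀ᵐ x ∂μ, 1 < p x ∧ p x ≠ ∞) {h : X → ℝ≥0∞} (hh : Measurable h) {L lam : ℝ≥0∞}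
    (hlam : L < lam) (hlam_top : lam ≠ ∞)
    (hfin : ∫⁻ x, (h x / lam) ^ (conjExp p x).toReal ∂μ ≠ ∞)
    (hL : ∀ g, Measurable g → luxNorm μ p g ≤ 1 → ∫⁻ x, h x * g x ∂μ ≤ L) :
    ∫⁻ x, (h x / lam) ^ (conjExp p x).toReal ∂μ ≤ 1 := by
  set ρ := ∫⁻ x, (h x / lam) ^ (conjExp p x).toReal ∂μ with hρ
  by_contra! hρ1
  have hρ0 : ρ ≠ 0 := (zero_lt_one.trans hρ1).ne'
  have hlam0 : lam ≠ 0 := (zero_le.trans_lt hlam).ne'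
  -- `g` is the extremal function for `h / lam` in Hölder's inequality, normalised in `L^{p(·)}`.
  set g : X → ℝ≥0∞ := fun x =>
    (h x / lam) ^ ((conjExp p x).toReal - 1) * ρ ^ (-(p x).toReal⁻¹) with hg
  have hgm : Measurable g :=
    ((hh.div_const lam).pow ((measurable_conjExp hpm).ennreal_toReal.sub_const 1)).mul
      (measurable_const.pow hpm.ennreal_toReal.inv.neg)
  have hg1 : luxNorm μ p g ≤ 1 := by
    refine luxNorm_le_of_lintegral_le (hp.mono fun x hx => hx.2) one_pos (le_of_eq ?_)
    calc ∫⁻ x, (g x / 1) ^ (p x).toReal ∂μ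
        = ∫⁻ x, (h x / lam) ^ (conjExp p x).toReal * ρ⁻¹ ∂μ := by
          refine lintegral_congr_ae (hp.mono fun x ⟨hx1, hxt⟩ => ?_)
          have hpx : (p x).toReal ≠ 0 := (zero_lt_one.trans (one_lt_toReal_of_one_lt hx1 hxt)).ne'
          simp only [hg, div_one]
          rw [ENNReal.mul_rpow_of_nonneg _ _ ENNReal.toReal_nonneg,
            ← ENNReal.rpow_mul, ← ENNReal.rpow_mul, conjExp_toReal_sub_one_mul hx1 hxt,
            neg_mul, inv_mul_cancel₀ hpx, ENNReal.rpow_neg_one]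
      _ = 1 := by
        rw [lintegral_mul_const' _ _ (ENNReal.inv_ne_top.mpr hρ0), ← hρ,
          ENNReal.mul_inv_cancel hρ0 hfin]
  have hlam_le : lam ≤ ∫⁻ x, h x * g x ∂μ :=
    calc lam = ∫⁻ x, lam * (h x / lam) ^ (conjExp p x).toReal * ρ⁻¹ ∂μ := by
          rw [lintegral_mul_const' _ _ (ENNReal.inv_ne_top.mpr hρ0),
            lintegral_const_mul' _ _ hlam_top, ← hρ, mul_assoc,
            ENNReal.mul_inv_cancel hρ0 hfin, mul_one]
      _ ≤ ∫⁻ x, h x * g x ∂μ := by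
          refine lintegral_mono_ae (hp.mono fun x ⟨hx1, hxt⟩ => ?_)
          have hsplit : (h x / lam) ^ (conjExp p x).toReal
              = (h x / lam) * (h x / lam) ^ ((conjExp p x).toReal - 1) := by
            conv_lhs => rw [← add_sub_cancel (1 : ℝ) (conjExp p x).toReal]
            rw [ENNReal.rpow_add_of_nonneg _ _ zero_le_one
              (sub_nonneg.mpr (one_le_conjExp_toReal hx1 hxt)), ENNReal.rpow_one]
          have hρp : ρ ^ (-1 : ℝ) ≤ ρ ^ (-(p x).toReal⁻¹) :=
            ENNReal.rpow_le_rpow_of_exponent_le hρ1.le <| neg_le_neg <|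
              inv_le_one_of_one_le₀ (one_lt_toReal_of_one_lt hx1 hxt).le
          calc lam * (h x / lam) ^ (conjExp p x).toReal * ρ⁻¹
              ≤ lam * (h x / lam) ^ (conjExp p x).toReal * ρ ^ (-(p x).toReal⁻¹) := by
                rw [← ENNReal.rpow_neg_one]
                exact mul_le_mul_right hρp _
            _ = lam * (h x / lam) * g x := by rw [hsplit, hg]; ring
            _ = h x * g x := by rw [ENNReal.mul_div_cancel hlam0 hlam_top]
  exact hlam.not_ge (hlam_le.trans (hL g hgm hg1))

theorem luxNorm_conjExp_indicator_le {p : X → ℝ≥0∞} (hpm : Measurable p) (hp : 1 < essInf p μ)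
    (hpt : ∀ᵐ x ∂μ, p x ≠ ∞) {B : Set X} (hB : MeasurableSet B) (hμB : μ B ≠ ∞)
    {u : X → ℝ≥0∞} (hu : Measurable u) {L : ℝ≥0∞}
    (hL : ∀ g, Measurable g → luxNorm μ p g ≤ 1 → ∫⁻ x in B, u x * g x ∂μ ≤ L) :
    luxNorm μ (conjExp p) (B.indicator u) ≤ L := by
  have hp1 : ∀ᵐ x ∂μ, 1 < p x ∧ p x ≠ ∞ := (ae_lt_of_lt_essInf hp).and hpt
  obtain ⟨s, hs⟩ := ae_conjExp_toReal_le hp hpt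
  have he : ∀ᵐ x ∂μ, 0 < (conjExp p x).toReal ∧ (conjExp p x).toReal ≤ s :=
    (hp1.and hs).mono fun x ⟨⟨hx1, hxt⟩, hxs⟩ =>
      ⟨zero_lt_one.trans_le (one_le_conjExp_toReal hx1 hxt), hxs⟩
  refine le_of_forall_gt_imp_ge_of_dense fun lam hlam => ?_
  rcases eq_or_ne lam ∞ with rfl | hlam_top
  · exact le_top
  have hlam0 : lam ≠ 0 := (zero_le.trans_lt hlam).ne'
  refine luxNorm_le_of_lintegral_le (hp1.mono fun x hx => conjExp_ne_top hx.1)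
    (zero_le.trans_lt hlam) ?_
  rw [lintegral_rpow_div_eq_iSup_min (hu.indicator hB) (measurable_conjExp hpm).ennreal_toReal
    (fun _ => ENNReal.toReal_nonneg) hlam0]
  refine iSup_le fun n => lintegral_rpow_conjExp_le_one hpm hp1
    ((hu.indicator hB).min measurable_const) hlam hlam_top ?_ fun g hg hg1 => ?_
  · refine lintegral_rpow_ne_top_of_le_indicator he hB hμB
      (ENNReal.div_ne_top (ENNReal.natCast_ne_top n) hlam0) fun x => ?_
    by_cases hxB : x ∈ B
    · simpa [hxB] using ENNReal.div_le_div_right (min_le_right _ _) lam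
    · simp [hxB]
  · calc ∫⁻ x, min (B.indicator u x) n * g x ∂μ ≤ ∫⁻ x, B.indicator u x * g x ∂μ :=
          lintegral_mono fun x => mul_le_mul_left (min_le_left _ _) _
      _ = ∫⁻ x in B, u x * g x ∂μ := by
          rw [← lintegral_indicator hB]
          congr with x
          by_cases hxB : x ∈ B <;> simp [hxB]
      _ ≤ L := hL g hg hg1

end Duality

section HomogeneousSpace

variable [MeasurableSpace X] {d : X → X → ℝ} {μ : Measure X}

theorem IsDoubling.measure_qball_ne_zero {Cμ : ℝ≥0∞} (h : IsDoubling d μ Cμ) (c : X) {r : ℝ}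
    (hr : 0 < r) : μ (qball d c r) ≠ 0 := by
  obtain ⟨hpos, hle, -⟩ := h.2 c r hr
  intro h0
  rw [h0, mul_zero, nonpos_iff_eq_zero] at hle
  exact hpos.ne' hle

theorem IsDoubling.measure_qball_ne_top {Cμ : ℝ≥0∞} (h : IsDoubling d μ Cμ) (c : X) {r : ℝ}
    (hr : 0 < r) : μ (qball d c r) ≠ ∞ :=
  ne_top_of_le_ne_top (h.2 c r hr).2.2.ne (le_mul_of_one_le_left zero_le h.1)

theorem le_fracMax_of_mem_qball (η : ℝ) (f : X → ℝ≥0∞) {c x : X} {r : ℝ} (hr : 0 < r)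
    (hx : x ∈ qball d c r) :
    μ (qball d c r) ^ (η - 1) * ∫⁻ y in qball d c r, f y ∂μ ≤ fracMax d μ η f x :=
  le_iSup_of_le c <| le_iSup_of_le r <| le_iSup_of_le hr <| le_iSup_of_le hx le_rfl

end HomogeneousSpace

def FracMaxWeakType [MeasurableSpace X] (d : X → X → ℝ) (μ : Measure X) (η : ℝ)
    (p q ω : X → ℝ≥0∞) (C : ℝ≥0∞) : Prop :=
  ∀ f : X → ℝ≥0∞, Measurable f → ∀ t : ℝ≥0∞, 0 < t →
    t * luxNorm μ q ({x | t < fracMax d μ η f x}.indicator ω) ≤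
      C * luxNorm μ p (fun x => ω x * f x)

namespace FracMaxWeakType

variable [MeasurableSpace X] {d : X → X → ℝ} {μ : Measure X} {η : ℝ} {p q ω : X → ℝ≥0∞}
  {C : ℝ≥0∞}

theorem rpow_mul_setLIntegral_mul_luxNorm_le (hM : FracMaxWeakType d μ η p q ω C)
    (hball : ∀ c r, MeasurableSet (qball d c r)) (hωm : Measurable ω)
    (hω : ∀ᵐ x ∂μ, 0 < ω x ∧ ω x < ∞) {c : X} {r : ℝ} (hr : 0 < r) {g : X → ℝ≥0∞}
    (hg : Measurable g) (hg1 : luxNorm μ p g ≤ 1) :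
    μ (qball d c r) ^ (η - 1) * (∫⁻ x in qball d c r, (ω x)⁻¹ * g x ∂μ) *
      luxNorm μ q ((qball d c r).indicator ω) ≤ C := by
  set B := qball d c r
  set f := B.indicator fun x => (ω x)⁻¹ * g x
  have hωf : luxNorm μ p (fun x => ω x * f x) ≤ 1 := by
    refine (luxNorm_mono_ae p (hω.mono fun x hx => ?_)).trans hg1
    by_cases hxB : x ∈ B
    · simp [f, hxB, ← mul_assoc, ENNReal.mul_inv_cancel hx.1.ne' hx.2.ne]
    · simp [f, hxB]
  have hB_sub : ∀ t < μ B ^ (η - 1) * ∫⁻ x in B, (ω x)⁻¹ * g x ∂μ,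
      B ⊆ {x | t < fracMax d μ η f x} := fun t ht x hx => by
    refine ht.trans_le (le_trans (le_of_eq ?_) (le_fracMax_of_mem_qball η f hr hx))
    rw [setLIntegral_congr_fun (hball c r) fun y hy => indicator_of_mem hy _]
  refine ENNReal.mul_le_of_forall_lt fun t ht N hN => ?_
  rcases eq_or_ne t 0 with rfl | ht0
  · simp
  calc t * N ≤ t * luxNorm μ q ({x | t < fracMax d μ η f x}.indicator ω) := by
        refine mul_le_mul_right (hN.le.trans (luxNorm_mono_ae q (Eventually.of_forall ?_))) t
        exact indicator_le_indicator_of_subset (hB_sub t ht) fun _ => zero_le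
    _ ≤ C * luxNorm μ p (fun x => ω x * f x) :=
        hM f ((hωm.inv.mul hg).indicator (hball c r)) t (pos_iff_ne_zero.mpr ht0)
    _ ≤ C := by simpa using mul_le_mul_right hωf C

theorem luxNorm_indicator_ne_top (hM : FracMaxWeakType d μ η p q ω C)
    (hball : ∀ c r, MeasurableSet (qball d c r)) {Cμ : ℝ≥0∞} (hdbl : IsDoubling d μ Cμ)
    (hp : ∀ᵐ x ∂μ, 1 ≤ p x ∧ p x ≠ ∞) (hωm : Measurable ω)
    (hω : ∀ᵐ x ∂μ, 0 < ω x ∧ ω x < ∞) (hC : C ≠ ∞) (c : X) {r : ℝ} (hr : 0 < r) :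
    luxNorm μ q ((qball d c r).indicator ω) ≠ ∞ := by
  have hμ0 := hdbl.measure_qball_ne_zero c hr
  have hμt := hdbl.measure_qball_ne_top c hr
  set B := qball d c r
  set a := (max 1 (μ B))⁻¹
  have ha0 : a ≠ 0 := ENNReal.inv_ne_zero.mpr (max_ne_top ENNReal.one_ne_top hμt)
  have hg1 : luxNorm μ p (B.indicator fun _ => a) ≤ 1 := by
    refine luxNorm_indicator_const_le_one hp (hball c r)
      (ENNReal.inv_le_one.mpr (le_max_left _ _)) ?_
    calc a * μ B ≤ a * max 1 (μ B) := mul_le_mul_right (le_max_right _ _) a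
      _ = 1 := ENNReal.inv_mul_cancel (zero_lt_one.trans_le (le_max_left _ _)).ne'
          (max_ne_top ENNReal.one_ne_top hμt)
  have hint : ∫⁻ x in B, (ω x)⁻¹ * B.indicator (fun _ => a) x ∂μ ≠ 0 := by
    have hm : Measurable fun x => (ω x)⁻¹ * B.indicator (fun _ => a) x :=
      hωm.inv.mul (measurable_const.indicator (hball c r))
    intro h0
    rw [lintegral_eq_zero_iff hm] at h0
    have hfalse : ∀ᵐ x ∂μ.restrict B, False := by
      filter_upwards [h0, ae_restrict_mem (hball c r), ae_restrict_of_ae hω]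
        with x hx0 hxB hx
      simp [hxB, ha0, hx.2.ne] at hx0
    rw [eventually_false_iff_eq_bot, ae_eq_bot, Measure.restrict_eq_zero] at hfalse
    exact hμ0 hfalse
  have hA : μ B ^ (η - 1) * ∫⁻ x in B, (ω x)⁻¹ * B.indicator (fun _ => a) x ∂μ ≠ 0 :=
    mul_ne_zero (by simp [ENNReal.rpow_eq_zero_iff, hμ0, hμt]) hint
  intro hN
  have hbd := hM.rpow_mul_setLIntegral_mul_luxNorm_le hball hωm hω (c := c) hr
    (measurable_const.indicator (hball c r)) hg1
  rw [hN, ENNReal.mul_top hA, top_le_iff] at hbd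
  exact hC hbd

theorem rpow_mul_luxNorm_mul_luxNorm_le (hM : FracMaxWeakType d μ η p q ω C)
    (hball : ∀ c r, MeasurableSet (qball d c r)) {Cμ : ℝ≥0∞} (hdbl : IsDoubling d μ Cμ)
    (hpm : Measurable p) (hp : 1 < essInf p μ) (hpt : ∀ᵐ x ∂μ, p x ≠ ∞) (hωm : Measurable ω)
    (hω : ∀ᵐ x ∂μ, 0 < ω x ∧ ω x < ∞) (hC : C ≠ ∞) (c : X) {r : ℝ} (hr : 0 < r) :
    μ (qball d c r) ^ (η - 1) * luxNorm μ q ((qball d c r).indicator ω) *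
      luxNorm μ (conjExp p) ((qball d c r).indicator fun x => (ω x)⁻¹) ≤ C := by
  have hμ0 := hdbl.measure_qball_ne_zero c hr
  have hμt := hdbl.measure_qball_ne_top c hr
  set B := qball d c r
  set N := luxNorm μ q (B.indicator ω)
  have hNt : N ≠ ∞ := hM.luxNorm_indicator_ne_top hball hdbl
    (((ae_lt_of_lt_essInf hp).and hpt).mono fun x hx => ⟨hx.1.le, hx.2⟩) hωm hω hC c hr
  rcases eq_or_ne N 0 with hN0 | hN0
  · simp [hN0]
  have ha0 : μ B ^ (η - 1) * N ≠ 0 :=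
    mul_ne_zero (by simp [ENNReal.rpow_eq_zero_iff, hμ0, hμt]) hN0
  have hat : μ B ^ (η - 1) * N ≠ ∞ :=
    ENNReal.mul_ne_top (by simp [ENNReal.rpow_eq_top_iff, hμ0, hμt]) hNt
  have hP : luxNorm μ (conjExp p) (B.indicator fun x => (ω x)⁻¹) ≤ C / (μ B ^ (η - 1) * N) := by
    refine luxNorm_conjExp_indicator_le hpm hp hpt (hball c r) hμt hωm.inv fun g hg hg1 => ?_
    rw [ENNReal.le_div_iff_mul_le (Or.inl ha0) (Or.inl hat)]
    calc (∫⁻ x in B, (ω x)⁻¹ * g x ∂μ) * (μ B ^ (η - 1) * N)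
        = μ B ^ (η - 1) * (∫⁻ x in B, (ω x)⁻¹ * g x ∂μ) * N := by ring
      _ ≤ C := hM.rpow_mul_setLIntegral_mul_luxNorm_le hball hωm hω hr hg hg1
  calc μ B ^ (η - 1) * N * luxNorm μ (conjExp p) (B.indicator fun x => (ω x)⁻¹)
      ≤ μ B ^ (η - 1) * N * (C / (μ B ^ (η - 1) * N)) := mul_le_mul_right hP _
    _ = C := ENNReal.mul_div_cancel ha0 hat

end FracMaxWeakType

theorem statement2_general {X : Type*} [MeasurableSpace X]
    (d : X → X → ℝ) (μ : Measure X) (Cμ : ℝ≥0∞)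
    (hball : ∀ (c : X) (r : ℝ), MeasurableSet (qball d c r))
    (hdbl : IsDoubling d μ Cμ)
    (η : ℝ)
    (p q : X → ℝ≥0∞) (hp : MemP μ p)
    (ω : X → ℝ≥0∞) (hω : IsWeight d μ ω)
    (C : ℝ≥0∞) (hC : C ≠ ∞)
    (hbound : ∀ f : X → ℝ≥0∞, Measurable f → ∀ t : ℝ≥0∞, 0 < t →
      t * luxNorm μ q ({x | t < fracMax d μ η f x}.indicator ω) ≤
        C * luxNorm μ p (fun x => ω x * f x)) :
    ApqConst d μ η p q ω ≠ ∞ := by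
  obtain ⟨⟨hpm, -, hpt, -⟩, hp1⟩ := hp
  obtain ⟨hωm, hωae, -⟩ := hω
  refine ne_top_of_le_ne_top hC (iSup_le fun c => iSup_le fun r => iSup_le fun hr => ?_)
  exact FracMaxWeakType.rpow_mul_luxNorm_mul_luxNorm_le hbound hball hdbl hpm hp1
    (ae_of_all _ hpt) hωm hωae hC c hr

/-- If `M_η : L^{p(·)}(X,ω) → WL^{q(·)}(X,ω)` is bounded, then
`ω ∈ A_{p(·),q(·)}(X)`. -/
theorem statement2 {X : Type*} [MeasurableSpace X]
    (d : X → X → ℝ) (A0 : ℝ) (μ : Measure X) (Cμ : ℝ≥0∞)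
    (hd : IsQuasiMetric d A0)
    (hball : ∀ (c : X) (r : ℝ), MeasurableSet (qball d c r))
    (hdbl : IsDoubling d μ Cμ)
    (η : ℝ) (hη0 : 0 ≤ η) (hη1 : η < 1)
    (p q : X → ℝ≥0∞) (hp : MemP μ p) (hq : MemP μ q)
    (hpLH : MemLH d p) (hqLH : MemLH d q)
    (hpq : ∀ x, (p x)⁻¹ = (q x)⁻¹ + ENNReal.ofReal η)
    (ω : X → ℝ≥0∞) (hω : IsWeight d μ ω)
    (C : ℝ≥0∞) (hC : C ≠ ∞)
    (hbound : ∀ f : X → ℝ≥0∞, Measurable f → ∀ t : ℝ≥0∞, 0 < t →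
      t * luxNorm μ q ({x | t < fracMax d μ η f x}.indicator ω) ≤
        C * luxNorm μ p (fun x => ω x * f x)) :
    ApqConst d μ η p q ω ≠ ∞ :=
  statement2_general d μ Cμ hball hdbl η p q hp ω hω C hC hbound

end
end

section
/- Let (X,d,μ) be a space of homogeneous type, let p(·), q(·) ∈ 𝒫₁(X) satisfy 1/p(x) − 1/q(x) ≡ η for a constant η ∈ [0,1), and let ω be a weight on X. Then there is a constant C depending only on p(·), q(·) and η such that [ω^{−1}]_{A_{p′(·)}} ≤ C·[ω]_{A_{p(·),q(·)}}, where [ω^{−1}]_{A_{p′(·)}} := sup over balls B ⊆ X of μ(B)^{−1} ‖ω^{−1} χ_B‖_{p′(·)} ‖ω χ_B‖_{p(·)}. -/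
open MeasureTheory ENNReal Set Filter Topology

noncomputable section

variable {X : Type*}

section Aux

open MeasureTheory ENNReal Set

/-- Young / weighted AM-GM in `ℝ≥0∞`, crude form. -/
lemma ennreal_geom_le_add {w₁ w₂ : ℝ} (hw₁ : 0 ≤ w₁) (hw₂ : 0 ≤ w₂) (hw : w₁ + w₂ = 1)
    (x y : ℝ≥0∞) : x ^ w₁ * y ^ w₂ ≤ x + y := by
  rcases eq_or_ne x ∞ with hx | hx
  · rw [hx, top_add]; exact le_top
  rcases eq_or_ne y ∞ with hy | hy
  · rw [hy, add_top]; exact le_top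
  lift x to NNReal using hx
  lift y to NNReal using hy
  rw [← ENNReal.coe_rpow_of_nonneg x hw₁, ← ENNReal.coe_rpow_of_nonneg y hw₂,
    ← ENNReal.coe_mul, ← ENNReal.coe_add, ENNReal.coe_le_coe]
  set W₁ : NNReal := ⟨w₁, hw₁⟩ with hW₁
  set W₂ : NNReal := ⟨w₂, hw₂⟩ with hW₂
  have hsum : W₁ + W₂ = 1 := by
    ext
    push_cast
    exact hw
  have h1 : W₁ ≤ 1 := hsum ▸ le_add_right le_rfl
  have h2 : W₂ ≤ 1 := hsum ▸ le_add_left le_rfl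
  calc x ^ w₁ * y ^ w₂ = x ^ (W₁ : ℝ) * y ^ (W₂ : ℝ) := rfl
    _ ≤ W₁ * x + W₂ * y := NNReal.geom_mean_le_arith_mean2_weighted W₁ W₂ x y hsum
    _ ≤ 1 * x + 1 * y := add_le_add (mul_le_mul' h1 le_rfl) (mul_le_mul' h2 le_rfl)
    _ = x + y := by rw [one_mul, one_mul]

/-- Pointwise Young inequality used for variable-exponent Hölder. -/
lemma pointwise_young (m : ℝ≥0∞) (η P Q : ℝ) (hη : 0 ≤ η)
    (hP : 1 ≤ P) (hQ : 1 ≤ Q) (hPQ : P⁻¹ = Q⁻¹ + η) (t : ℝ≥0∞) :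
    (t / m ^ η) ^ P ≤ t ^ Q + m⁻¹ := by
  have hP0 : (0:ℝ) < P := lt_of_lt_of_le one_pos hP
  have hQ0 : (0:ℝ) < Q := lt_of_lt_of_le one_pos hQ
  have hw : P / Q + η * P = 1 := by
    calc P / Q + η * P = P * (Q⁻¹ + η) := by ring
      _ = P * P⁻¹ := by rw [hPQ]
      _ = 1 := mul_inv_cancel₀ hP0.ne'
  have hQP : Q * (P / Q) = P := by field_simp
  calc (t / m ^ η) ^ P = t ^ P * ((m ^ η) ^ P)⁻¹ := by
        rw [ENNReal.div_rpow_of_nonneg _ _ hP0.le, div_eq_mul_inv]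
    _ = (t ^ Q) ^ (P / Q) * (m⁻¹) ^ (η * P) := by
        rw [← ENNReal.rpow_mul t Q (P / Q), hQP, ← ENNReal.rpow_mul m η P,
          ENNReal.inv_rpow]
    _ ≤ t ^ Q + m⁻¹ :=
        ennreal_geom_le_add (div_nonneg hP0.le hQ0.le) (mul_nonneg hη hP0.le) hw _ _

/-- For finite exponents the Luxemburg norm has no `essSup` part. -/
lemma luxNorm_finite {X : Type*} [MeasurableSpace X] (μ : Measure X)
    (p : X → ℝ≥0∞) (f : X → ℝ≥0∞) (hpt : ∀ x, p x ≠ ∞) :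
    luxNorm μ p f =
      sInf {lam : ℝ≥0∞ | 0 < lam ∧ (∫⁻ x, (f x / lam) ^ (p x).toReal ∂μ) ≤ 1} := by
  have h1 : {x | p x ≠ ∞} = Set.univ := Set.eq_univ_of_forall hpt
  have h2 : {x | p x = ∞} = (∅ : Set X) := by
    ext x; simp [hpt x]
  unfold luxNorm
  rw [h1, h2, Measure.restrict_univ, Measure.restrict_empty]
  simp only [essSup_measure_zero, bot_eq_zero, add_zero]

/-- Key embedding: `‖f‖_{p(·)} ≤ 2 μ(B)^η ‖f‖_{q(·)}` for `f` supported in `B`,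
when `1/p = 1/q + η`. -/
lemma luxNorm_embed {X : Type*} [MeasurableSpace X] (μ : Measure X)
    (p q : X → ℝ≥0∞) (hp1 : ∀ x, 1 ≤ p x) (hpt : ∀ x, p x ≠ ∞)
    (hq1 : ∀ x, 1 ≤ q x) (hqt : ∀ x, q x ≠ ∞)
    (η : ℝ) (hη0 : 0 ≤ η)
    (hpq : ∀ x, (p x)⁻¹ = (q x)⁻¹ + ENNReal.ofReal η)
    (B : Set X) (hB : MeasurableSet B) (hm0 : μ B ≠ 0) (hmt : μ B ≠ ∞)
    (f : X → ℝ≥0∞) (hf : ∀ x ∉ B, f x = 0) :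
    luxNorm μ p f ≤ 2 * μ B ^ η * luxNorm μ q f := by
  set m := μ B with hm
  have hmη0 : m ^ η ≠ 0 := by
    simp [ENNReal.rpow_eq_zero_iff, hm0, hmt]
  have hmηt : m ^ η ≠ ∞ := ENNReal.rpow_ne_top_of_nonneg hη0 hmt
  set c : ℝ≥0∞ := 2 * m ^ η with hc
  have hc0 : c ≠ 0 := mul_ne_zero two_ne_zero hmη0
  have hct : c ≠ ∞ := ENNReal.mul_ne_top ENNReal.ofNat_ne_top hmηt
  -- exponent facts
  have hP1 : ∀ x, 1 ≤ (p x).toReal := fun x => by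
    simpa using ENNReal.toReal_mono (hpt x) (hp1 x)
  have hQ1 : ∀ x, 1 ≤ (q x).toReal := fun x => by
    simpa using ENNReal.toReal_mono (hqt x) (hq1 x)
  have hP0 : ∀ x, (0:ℝ) < (p x).toReal := fun x => lt_of_lt_of_le one_pos (hP1 x)
  have hPQ : ∀ x, ((p x).toReal)⁻¹ = ((q x).toReal)⁻¹ + η := fun x => by
    have hq0 : q x ≠ 0 := (lt_of_lt_of_le zero_lt_one (hq1 x)).ne'
    have h := congrArg ENNReal.toReal (hpq x)
    rwa [ENNReal.toReal_inv, ENNReal.toReal_add (by simpa [ENNReal.inv_ne_top] using hq0)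
      ENNReal.ofReal_ne_top, ENNReal.toReal_inv, ENNReal.toReal_ofReal hη0] at h
  rw [luxNorm_finite μ p f hpt, luxNorm_finite μ q f hqt]
  set Sp := {lam : ℝ≥0∞ | 0 < lam ∧ (∫⁻ x, (f x / lam) ^ (p x).toReal ∂μ) ≤ 1} with hSp
  set Sq := {lam : ℝ≥0∞ | 0 < lam ∧ (∫⁻ x, (f x / lam) ^ (q x).toReal ∂μ) ≤ 1} with hSq
  have hmem : ∀ lam ∈ Sq, c * lam ∈ Sp := by
    rintro lam ⟨hlam, hmod⟩
    refine ⟨ENNReal.mul_pos hc0 hlam.ne', ?_⟩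
    rcases eq_or_ne lam ∞ with htop | hlt
    · have hz : ∀ x, (f x / (c * lam)) ^ (p x).toReal = 0 := fun x => by
        rw [htop, ENNReal.mul_top hc0, ENNReal.div_top,
          ENNReal.zero_rpow_of_pos (hP0 x)]
      simp only [hz, lintegral_zero]
      exact zero_le_one
    · have step1 : ∀ x, (f x / (c * lam)) ^ (p x).toReal ≤
          2⁻¹ * ((f x / (m ^ η * lam)) ^ (p x).toReal) := by
        intro x
        have e1 : f x / (c * lam) = (f x / (m ^ η * lam)) / 2 := by
          rw [hc, mul_comm (2 : ℝ≥0∞) (m ^ η), mul_right_comm, div_eq_mul_inv,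
            div_eq_mul_inv, div_eq_mul_inv,
            ENNReal.mul_inv (Or.inr ENNReal.ofNat_ne_top) (Or.inr two_ne_zero), ← mul_assoc]
        have h2P : (2:ℝ≥0∞) ≤ 2 ^ (p x).toReal := by
          calc (2:ℝ≥0∞) = 2 ^ (1:ℝ) := (ENNReal.rpow_one 2).symm
            _ ≤ 2 ^ (p x).toReal :=
              ENNReal.rpow_le_rpow_of_exponent_le (by norm_num) (hP1 x)
        rw [e1, ENNReal.div_rpow_of_nonneg _ _ (hP0 x).le, div_eq_mul_inv, mul_comm]
        exact mul_le_mul' (ENNReal.inv_le_inv.mpr h2P) le_rfl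
      have step2 : ∀ x, (f x / (m ^ η * lam)) ^ (p x).toReal ≤
          (f x / lam) ^ (q x).toReal + B.indicator (fun _ => m⁻¹) x := by
        intro x
        by_cases hx : x ∈ B
        · have e2 : f x / (m ^ η * lam) = (f x / lam) / m ^ η := by
            rw [div_eq_mul_inv, div_eq_mul_inv, div_eq_mul_inv,
              ENNReal.mul_inv (Or.inl hmη0) (Or.inl hmηt)]
            ring
          rw [e2, Set.indicator_of_mem hx]
          exact pointwise_young m η _ _ hη0 (hP1 x) (hQ1 x) (hPQ x) _
        · rw [hf x hx, Set.indicator_of_notMem hx]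
          simp [ENNReal.zero_rpow_of_pos (hP0 x)]
      calc (∫⁻ x, (f x / (c * lam)) ^ (p x).toReal ∂μ)
          ≤ ∫⁻ x, 2⁻¹ * ((f x / (m ^ η * lam)) ^ (p x).toReal) ∂μ :=
            lintegral_mono step1
        _ = 2⁻¹ * ∫⁻ x, (f x / (m ^ η * lam)) ^ (p x).toReal ∂μ :=
            lintegral_const_mul' _ _ (by simp)
        _ ≤ 2⁻¹ * ∫⁻ x, ((f x / lam) ^ (q x).toReal + B.indicator (fun _ => m⁻¹) x) ∂μ :=
            mul_le_mul' le_rfl (lintegral_mono step2)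
        _ = 2⁻¹ * ((∫⁻ x, (f x / lam) ^ (q x).toReal ∂μ) +
              ∫⁻ x, B.indicator (fun _ => m⁻¹) x ∂μ) := by
            rw [lintegral_add_right _ (measurable_const.indicator hB)]
        _ ≤ 2⁻¹ * (1 + 1) := by
            have hind : (∫⁻ x, B.indicator (fun _ => m⁻¹) x ∂μ) = m⁻¹ * m := by
              rw [lintegral_indicator_const hB]
            rw [hind, ENNReal.inv_mul_cancel hm0 hmt]
            exact mul_le_mul' le_rfl (add_le_add hmod le_rfl)
        _ = 1 := by
            rw [one_add_one_eq_two, ENNReal.inv_mul_cancel two_ne_zero ENNReal.ofNat_ne_top]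
  have hsub : ∀ lam ∈ Sq, sInf Sp ≤ c * lam := fun lam hlam => sInf_le (hmem lam hlam)
  have hdiv : sInf Sp / c ≤ sInf Sq := le_sInf fun lam hlam =>
    (ENNReal.div_le_iff_le_mul (Or.inl hc0) (Or.inl hct)).mpr
      (by rw [mul_comm]; exact hsub lam hlam)
  calc sInf Sp = sInf Sp / c * c := (ENNReal.div_mul_cancel hc0 hct).symm
    _ ≤ sInf Sq * c := mul_le_mul' hdiv le_rfl
    _ = c * sInf Sq := mul_comm _ _

end Aux

/-- `[ω⁻¹]_{A_{p′(·)}} ≤ C·[ω]_{A_{p(·),q(·)}}`, where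
`[ω⁻¹]_{A_{p′(·)}} = sup_B μ(B)^{−1} ‖ω⁻¹χ_B‖_{p′(·)} ‖ωχ_B‖_{p(·)}`. -/
theorem statement5 {X : Type*} [MeasurableSpace X]
    (d : X → X → ℝ) (A0 : ℝ) (μ : Measure X) (Cμ : ℝ≥0∞)
    (hd : IsQuasiMetric d A0)
    (hball : ∀ (c : X) (r : ℝ), MeasurableSet (qball d c r))
    (hdbl : IsDoubling d μ Cμ)
    (η : ℝ) (hη0 : 0 ≤ η) (hη1 : η < 1)
    (p q : X → ℝ≥0∞) (hp : MemP1 μ p) (hq : MemP1 μ q)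
    (hpq : ∀ x, (p x)⁻¹ = (q x)⁻¹ + ENNReal.ofReal η)
    (ω : X → ℝ≥0∞) (hω : IsWeight d μ ω) :
    ∃ C : ℝ≥0∞, C ≠ ∞ ∧
      (⨆ (c : X) (r : ℝ) (_ : 0 < r),
        μ (qball d c r) ^ (-1 : ℝ) *
          luxNorm μ (conjExp p) ((qball d c r).indicator fun x => (ω x)⁻¹) *
            luxNorm μ p ((qball d c r).indicator ω)) ≤
        C * ApqConst d μ η p q ω := by
  refine ⟨2, ENNReal.ofNat_ne_top, ?_⟩
  refine iSup_le fun c => iSup_le fun r => iSup_le fun hr => ?_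
  set B := qball d c r with hBdef
  set m := μ B with hm
  obtain ⟨h2pos, h2le, h2fin⟩ := hdbl.2 c r hr
  rw [← hBdef, ← hm] at h2le h2fin
  have hm0 : m ≠ 0 := by
    intro h
    rw [h, mul_zero] at h2le
    exact absurd (lt_of_lt_of_le h2pos h2le) (lt_irrefl 0)
  have hmt : m ≠ ∞ := by
    have h1 : m ≤ Cμ * m := by
      calc m = 1 * m := (one_mul m).symm
        _ ≤ Cμ * m := mul_le_mul' hdbl.1 le_rfl
    exact ne_top_of_lt (lt_of_le_of_lt h1 h2fin)
  have hkey : luxNorm μ p (B.indicator ω) ≤ 2 * m ^ η * luxNorm μ q (B.indicator ω) :=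
    luxNorm_embed μ p q hp.2.1 hp.2.2.1 hq.2.1 hq.2.2.1 η hη0 hpq B (hball c r) hm0 hmt
      _ (fun x hx => Set.indicator_of_notMem hx _)
  have hrw : m ^ (η - 1) = m ^ η * m ^ (-1 : ℝ) := by
    rw [← ENNReal.rpow_add _ _ hm0 hmt, sub_eq_add_neg]
  calc m ^ (-1 : ℝ) * luxNorm μ (conjExp p) (B.indicator fun x => (ω x)⁻¹) *
        luxNorm μ p (B.indicator ω)
      ≤ m ^ (-1 : ℝ) * luxNorm μ (conjExp p) (B.indicator fun x => (ω x)⁻¹) *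
        (2 * m ^ η * luxNorm μ q (B.indicator ω)) := mul_le_mul' le_rfl hkey
    _ = 2 * (m ^ (η - 1) * luxNorm μ q (B.indicator ω) *
        luxNorm μ (conjExp p) (B.indicator fun x => (ω x)⁻¹)) := by
        rw [hrw]; ring
    _ ≤ 2 * ApqConst d μ η p q ω := by
        refine mul_le_mul' le_rfl ?_
        rw [ApqConst]
        exact le_iSup_of_le c (le_iSup_of_le r (le_iSup_of_le hr le_rfl))

end
end
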